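/- Let L be a canonical labeller on edge-coloured graphs over the colour set C := P(S×S) ∪ N, i.e., L(G) ≅ G for every edge-coloured graph G, and L(G) = L(G') if and only if G ≅ G', for all edge-coloured graphs G, G'. Then: (i) for every site graph S₀ there is a unique site graph, denoted L*(S₀), with ρ(L*(S₀)) = L(ρ(S₀)); and (ii) the resulting map L* is a canonical labeller on site graphs, i.e., L*(S₀) ≅ S₀ for every site graph S₀, and L*(S₀) = L*(S₁) if and only if S₀ ≅ S₁, for all site graphs S₀, S₁. -/

import Mathlib

/-- An edge-coloured (multi)graph on vertex set `Fin n`: `col v w` is the set of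
colours of directed edges from `v` to `w`. -/
structure ColGraph (C : Type) where
  n : ℕ
  col : Fin n → Fin n → Set C

namespace ColGraph

variable {C : Type}

/-- The rigidity condition: for each vertex, distinct outgoing edges have distinct
colours and distinct incoming edges have distinct colours. -/
def Rigid (G : ColGraph C) : Prop :=
  (∀ (v w w' : Fin G.n) (c : C), c ∈ G.col v w → c ∈ G.col v w' → w = w') ∧
  (∀ (v w w' : Fin G.n) (c : C), c ∈ G.col w v → c ∈ G.col w' v → w = w')

/-- `φ` is an isomorphism of edge-coloured graphs from `G` to `G'`. -/
def IsIso (G G' : ColGraph C) (φ : Fin G.n ≃ Fin G'.n) : Prop :=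
  ∀ v w : Fin G.n, G'.col (φ v) (φ w) = G.col v w

/-- `G ≅ G'`. -/
def Iso (G G' : ColGraph C) : Prop := ∃ φ : Fin G.n ≃ Fin G'.n, IsIso G G' φ

/-- `(G,v) ≅ (G',v')`. -/
def IsoPt (G : ColGraph C) (v : Fin G.n) (G' : ColGraph C) (v' : Fin G'.n) : Prop :=
  ∃ φ : Fin G.n ≃ Fin G'.n, IsIso G G' φ ∧ φ v = v'

/-- The relabelled graph `α(G)`. -/
def relabel (G : ColGraph C) (α : Fin G.n ≃ Fin G.n) : ColGraph C where
  n := G.n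
  col v w := G.col (α.symm v) (α.symm w)

/-- The DFA state set `S_G = V_G ∪ {⊥_v | v ∈ V_G}`: `Sum.inl v` is the vertex `v`,
`Sum.inr v` is the sink state `⊥_v`. -/
abbrev State (G : ColGraph C) : Type := Fin G.n ⊕ Fin G.n

/-- Symbols: `Sum.inl c` is the colour `c`, `Sum.inr c` is the reverse colour `c⁻`. -/
abbrev Sym (C : Type) : Type := C ⊕ C

/-- Membership in the alphabet `Σ_G = C_G ∪ {c⁻ | c ∈ C_G}`, where `C_G` is the set of
colours of edges of `G`. -/
def InAlphabet (G : ColGraph C) : Sym C → Prop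
  | Sum.inl c => ∃ v w, c ∈ G.col v w
  | Sum.inr c => ∃ v w, c ∈ G.col v w

open scoped Classical in
/-- The transition function `δ_G : S_G × Σ_G → S_G`. -/
noncomputable def delta (G : ColGraph C) : State G → Sym C → State G
  | Sum.inl v, Sum.inl c =>
      if h : ∃ w, c ∈ G.col v w then Sum.inl h.choose else Sum.inr v
  | Sum.inl v, Sum.inr c =>
      if h : ∃ w, c ∈ G.col w v then Sum.inl h.choose else Sum.inr v
  | Sum.inr v, _ => Sum.inr v

/-- The extension `δ̂_G` of `δ_G` to words. -/
noncomputable def deltaHat (G : ColGraph C) (s : State G) (w : List (Sym C)) : State G :=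
  w.foldl G.delta s

/-- Vertex bisimilarity `s ~_G s'`: for every word `w` over the alphabet `Σ_G`,
`δ̂_G(s,w) ∈ V_G ↔ δ̂_G(s',w) ∈ V_G`. -/
def Bisim (G : ColGraph C) (s s' : State G) : Prop :=
  ∀ w : List (Sym C), (∀ x ∈ w, G.InAlphabet x) →
    ((G.deltaHat s w).isLeft = true ↔ (G.deltaHat s' w).isLeft = true)

/-- The underlying undirected (simple) graph of `G`. -/
def toSimple (G : ColGraph C) : SimpleGraph (Fin G.n) :=
  SimpleGraph.fromRel fun v w => (G.col v w).Nonempty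

end ColGraph

/-- A site graph: vertices `Fin n`, undirected edges given as two-element sets of
(vertex, site) pairs, and a protein naming. -/
structure SiteGraph (N S : Type) where
  n : ℕ
  edges : Set (Set (Fin n × S))
  names : Fin n → N

namespace SiteGraph

variable {N S : Type}

/-- Well-formedness of a site graph: every edge is a two-element set of
(vertex, site) pairs, distinct edges are disjoint, and the edge set is finite. -/
def Wf (S₀ : SiteGraph N S) : Prop :=
  (∀ e ∈ S₀.edges, ∃ p q : Fin S₀.n × S, p ≠ q ∧ e = {p, q}) ∧
  (∀ e ∈ S₀.edges, ∀ e' ∈ S₀.edges, e ≠ e' → e ∩ e' = ∅) ∧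
  S₀.edges.Finite

/-- `φ` is a site-graph isomorphism from `S₀` to `S₁`. -/
def IsSIso (S₀ S₁ : SiteGraph N S) (φ : Fin S₀.n ≃ Fin S₁.n) : Prop :=
  (∀ (v₁ v₂ : Fin S₀.n) (s₁ s₂ : S),
      ({(v₁, s₁), (v₂, s₂)} : Set (Fin S₀.n × S)) ∈ S₀.edges ↔
      ({(φ v₁, s₁), (φ v₂, s₂)} : Set (Fin S₁.n × S)) ∈ S₁.edges) ∧
  ∀ v : Fin S₀.n, S₀.names v = S₁.names (φ v)

/-- `S₀ ≅ S₁` as site graphs. -/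
def SIso (S₀ S₁ : SiteGraph N S) : Prop := ∃ φ, IsSIso S₀ S₁ φ

variable [LinearOrder S]

/-- The set of site pairs `(s,s')` with `{(v,s),(w,s')} ∈ E`. -/
def link (S₀ : SiteGraph N S) (v w : Fin S₀.n) : Set (S × S) :=
  {p | ({(v, p.1), (w, p.2)} : Set (Fin S₀.n × S)) ∈ S₀.edges}

/-- Strict lexicographic order on site pairs. -/
def lexLt (p q : S × S) : Prop := p.1 < q.1 ∨ (p.1 = q.1 ∧ p.2 < q.2)

/-- The directed edge relation of the encoding `ρ`: every loop `(v,v)` is an edge, and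
for `v ≠ w`, `(v,w)` is an edge iff the lexicographically least pair `(s,s')` with
`{(v,s),(w,s')} ∈ E` satisfies `s ≤ s'`. -/
def dirEdge (S₀ : SiteGraph N S) (v w : Fin S₀.n) : Prop :=
  v = w ∨ (v ≠ w ∧ ∃ p ∈ S₀.link v w,
    (∀ q ∈ S₀.link v w, p = q ∨ lexLt p q) ∧ p.1 ≤ p.2)

/-- The colour of the directed edge `(v,w)` in the encoding `ρ`: the set of site
pairs linking `v` to `w`, together with the protein name `ν(v)` if `v = w`. -/
def colourOf (S₀ : SiteGraph N S) (v w : Fin S₀.n) : Set ((S × S) ⊕ N) :=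
  (Sum.inl '' S₀.link v w) ∪ (if v = w then {Sum.inr (S₀.names v)} else ∅)

/-- The encoding `ρ` of site graphs into edge-coloured graphs over the colour set
consisting of sets of elements of `(S × S) ⊕ N`. -/
def rho (S₀ : SiteGraph N S) : ColGraph (Set ((S × S) ⊕ N)) where
  n := S₀.n
  col v w := {c | S₀.dirEdge v w ∧ c = S₀.colourOf v w}

end SiteGraph

/-!
Colours of `ρ(S)` record the whole set of site pairs linking two vertices, plus the name at a
loop, and between two linked vertices at least one of the two directed edges is present (if the
least linking pair `(s, s')` of `v` to `w` has `s' < s`, then the least linking pair of `w` to `v`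
is at most `(s', s)` and has first component at most its second). Hence `ρ` is injective on
well-formed site graphs and both preserves and reflects isomorphisms, and any edge-coloured graph
isomorphic to `ρ(S₀)` is `ρ` of a relabelled copy of `S₀`. The two claims then follow from the
defining properties of `L`, using that `ρ(S₀)` is rigid because distinct edges are disjoint.
-/

namespace SiteGraph

variable {N S : Type}

def relabel (S₀ : SiteGraph N S) {m : ℕ} (e : Fin S₀.n ≃ Fin m) : SiteGraph N S where
  n := m
  edges := Set.image (Prod.map e id) '' S₀.edges
  names := S₀.names ∘ e.symm

theorem isSIso_relabel (S₀ : SiteGraph N S) {m : ℕ} (e : Fin S₀.n ≃ Fin m) :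
    IsSIso S₀ (S₀.relabel e) e := by
  have hinj : Function.Injective (Set.image (Prod.map e (id : S → S))) :=
    Set.image_injective.mpr (e.injective.prodMap Function.injective_id)
  refine ⟨fun v₁ v₂ s₁ s₂ => ?_, fun v => congrArg S₀.names (e.symm_apply_apply v).symm⟩
  change _ ↔ ({(e v₁, s₁), (e v₂, s₂)} : Set (Fin m × S)) ∈ Set.image (Prod.map e id) '' S₀.edges
  rw [← hinj.mem_set_image, Set.image_pair]
  rfl

theorem Wf.relabel {S₀ : SiteGraph N S} (h : S₀.Wf) {m : ℕ} (e : Fin S₀.n ≃ Fin m) :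
    (S₀.relabel e).Wf := by
  set f : Fin S₀.n × S → Fin m × S := Prod.map e id
  have hf : Function.Injective f := e.injective.prodMap Function.injective_id
  refine ⟨?_, ?_, h.2.2.image _⟩
  · rintro _ ⟨_, he, rfl⟩
    obtain ⟨p, q, hpq, rfl⟩ := h.1 _ he
    exact ⟨f p, f q, hf.ne hpq, Set.image_pair f p q⟩
  · rintro _ ⟨a, ha, rfl⟩ _ ⟨b, hb, rfl⟩ hab
    change f '' a ∩ f '' b = ∅
    rw [← Set.image_inter hf, h.2.1 a ha b hb (fun hab' => hab (hab' ▸ rfl)), Set.image_empty]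

theorem eq_of_isSIso_refl {n : ℕ} {E E' : Set (Set (Fin n × S))} {ν ν' : Fin n → N}
    (h : Wf ⟨n, E, ν⟩) (h' : Wf ⟨n, E', ν'⟩)
    (hφ : IsSIso ⟨n, E, ν⟩ ⟨n, E', ν'⟩ (Equiv.refl _)) :
    (⟨n, E, ν⟩ : SiteGraph N S) = ⟨n, E', ν'⟩ := by
  have hE : E = E' := by
    ext e
    constructor
    · intro he
      obtain ⟨⟨v, s⟩, ⟨w, s'⟩, -, rfl⟩ := h.1 e he
      exact (hφ.1 v w s s').mp he
    · intro he
      obtain ⟨⟨v, s⟩, ⟨w, s'⟩, -, rfl⟩ := h'.1 e he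
      exact (hφ.1 v w s s').mpr he
  have hν : ν = ν' := funext hφ.2
  subst hE hν
  rfl

theorem link_symm {S₀ : SiteGraph N S} {v w : Fin S₀.n} {s s' : S} :
    (s, s') ∈ S₀.link v w ↔ (s', s) ∈ S₀.link w v := by
  change _ ∈ S₀.edges ↔ _ ∈ S₀.edges
  rw [Set.pair_comm]

theorem link_finite {S₀ : SiteGraph N S} (h : S₀.edges.Finite) {v w : Fin S₀.n} (hvw : v ≠ w) :
    (S₀.link v w).Finite := by
  refine h.preimage fun p _ q _ hpq => ?_
  rcases Set.pair_eq_pair_iff.mp hpq with ⟨h₁, h₂⟩ | ⟨h₁, -⟩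
  · simp only [Prod.mk.injEq, true_and] at h₁ h₂
    exact Prod.ext h₁ h₂
  · exact absurd (Prod.mk.inj h₁).1 hvw

theorem inl_mem_colourOf {S₀ : SiteGraph N S} {v w : Fin S₀.n} {p : S × S} :
    Sum.inl p ∈ S₀.colourOf v w ↔ p ∈ S₀.link v w := by
  unfold colourOf
  split_ifs <;> simp

theorem inr_mem_colourOf {S₀ : SiteGraph N S} {v w : Fin S₀.n} {x : N} :
    Sum.inr x ∈ S₀.colourOf v w ↔ v = w ∧ x = S₀.names v := by
  unfold colourOf
  split_ifs <;> simp [*]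

theorem eq_iff_eq_of_colourOf_eq {S₀ : SiteGraph N S} {v w v' w' : Fin S₀.n}
    (h : S₀.colourOf v w = S₀.colourOf v' w') : v = w ↔ v' = w' := by
  constructor
  · rintro rfl
    exact (inr_mem_colourOf.mp (h ▸ inr_mem_colourOf.mpr ⟨rfl, rfl⟩)).1
  · rintro rfl
    exact (inr_mem_colourOf.mp (h.symm ▸ inr_mem_colourOf.mpr ⟨rfl, rfl⟩)).1

theorem eq_of_mem_link_of_mem_link {S₀ : SiteGraph N S} (h : S₀.Wf) {v w w' : Fin S₀.n}
    {p : S × S} (hvw : v ≠ w) (hp : p ∈ S₀.link v w) (hp' : p ∈ S₀.link v w') : w = w' := by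
  have heq : ({(v, p.1), (w, p.2)} : Set (Fin S₀.n × S)) = {(v, p.1), (w', p.2)} := by
    by_contra hne
    exact (h.2.1 _ hp _ hp' hne).subset ⟨Set.mem_insert _ _, Set.mem_insert _ _⟩
  rcases Set.pair_eq_pair_iff.mp heq with ⟨-, h'⟩ | ⟨-, h'⟩
  · exact (Prod.mk.inj h').1
  · exact absurd (Prod.mk.inj h').1.symm hvw

theorem IsSIso.link_eq {S₀ S₁ : SiteGraph N S} {φ : Fin S₀.n ≃ Fin S₁.n} (hφ : IsSIso S₀ S₁ φ)
    (v w : Fin S₀.n) : S₁.link (φ v) (φ w) = S₀.link v w := by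
  ext ⟨s, s'⟩
  exact (hφ.1 v w s s').symm

theorem IsSIso.colourOf_eq {S₀ S₁ : SiteGraph N S} {φ : Fin S₀.n ≃ Fin S₁.n}
    (hφ : IsSIso S₀ S₁ φ) (v w : Fin S₀.n) : S₁.colourOf (φ v) (φ w) = S₀.colourOf v w := by
  simp only [colourOf, hφ.link_eq, φ.injective.eq_iff, ← hφ.2]

variable [LinearOrder S]

theorem exists_lexLeast {A : Set (S × S)} (hA : A.Finite) (hne : A.Nonempty) :
    ∃ p ∈ A, ∀ q ∈ A, p = q ∨ lexLt p q := by
  obtain ⟨p, hp, hmin⟩ := Set.exists_min_image A toLex hA hne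
  refine ⟨p, hp, fun q hq => ?_⟩
  rcases (hmin q hq).eq_or_lt with heq | hlt
  · exact Or.inl (toLex.injective heq)
  · exact Or.inr (Prod.Lex.toLex_lt_toLex.mp hlt)

theorem fst_le_of_eq_or_lexLt {p q : S × S} (h : p = q ∨ lexLt p q) : p.1 ≤ q.1 := by
  rcases h with rfl | hlt | ⟨heq, -⟩
  exacts [le_rfl, hlt.le, heq.le]

theorem dirEdge_or_dirEdge {S₀ : SiteGraph N S} (h : S₀.edges.Finite) {v w : Fin S₀.n}
    (hvw : v ≠ w) (hne : (S₀.link v w).Nonempty) : S₀.dirEdge v w ∨ S₀.dirEdge w v := by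
  obtain ⟨p, hp, hpmin⟩ := exists_lexLeast (link_finite h hvw) hne
  obtain ⟨q, hq, hqmin⟩ :=
    exists_lexLeast (link_finite h hvw.symm) ⟨(p.2, p.1), link_symm.mp hp⟩
  by_cases hp₁₂ : p.1 ≤ p.2
  · exact Or.inl (Or.inr ⟨hvw, p, hp, hpmin, hp₁₂⟩)
  by_cases hq₁₂ : q.1 ≤ q.2
  · exact Or.inr (Or.inr ⟨hvw.symm, q, hq, hqmin, hq₁₂⟩)
  have hpq : p.1 ≤ q.2 := fst_le_of_eq_or_lexLt (hpmin _ (link_symm.mpr hq))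
  have hqp : q.1 ≤ p.2 := fst_le_of_eq_or_lexLt (hqmin _ (link_symm.mp hp))
  exact (hp₁₂ (hpq.trans_lt (not_le.mp hq₁₂) |>.trans_le hqp).le).elim

theorem nonempty_link_of_dirEdge {S₀ : SiteGraph N S} {v w : Fin S₀.n} (hd : S₀.dirEdge v w)
    (hvw : v ≠ w) : (S₀.link v w).Nonempty :=
  let ⟨_, p, hp, _⟩ := hd.resolve_left hvw
  ⟨p, hp⟩

theorem rho_col_eq_iff {S₀ S₁ : SiteGraph N S} {v w : Fin S₀.n} {a b : Fin S₁.n} :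
    S₁.rho.col a b = S₀.rho.col v w ↔
      (S₁.dirEdge a b ↔ S₀.dirEdge v w) ∧
        (S₀.dirEdge v w → S₁.colourOf a b = S₀.colourOf v w) := by
  constructor
  · intro h
    have hmem (c) : S₁.dirEdge a b ∧ c = S₁.colourOf a b ↔ S₀.dirEdge v w ∧ c = S₀.colourOf v w :=
      Set.ext_iff.mp h c
    exact ⟨⟨fun hd => ((hmem _).mp ⟨hd, rfl⟩).1, fun hd => ((hmem _).mpr ⟨hd, rfl⟩).1⟩,
      fun hd => ((hmem _).mpr ⟨hd, rfl⟩).2.symm⟩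
  · rintro ⟨hd, hc⟩
    ext c
    exact ⟨fun ⟨h, hc'⟩ => ⟨hd.mp h, hc'.trans (hc (hd.mp h))⟩,
      fun ⟨h, hc'⟩ => ⟨hd.mpr h, hc'.trans (hc h).symm⟩⟩

theorem Wf.rho_rigid {S₀ : SiteGraph N S} (h : S₀.Wf) : S₀.rho.Rigid := by
  constructor
  · rintro v w w' c ⟨hd, rfl⟩ ⟨-, hc⟩
    by_cases hvw : v = w
    · exact hvw.symm.trans ((eq_iff_eq_of_colourOf_eq hc).mp hvw)
    · obtain ⟨p, hp⟩ := nonempty_link_of_dirEdge hd hvw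
      exact eq_of_mem_link_of_mem_link h hvw hp (inl_mem_colourOf.mp (hc ▸ inl_mem_colourOf.mpr hp))
  · rintro v w w' c ⟨hd, rfl⟩ ⟨-, hc⟩
    by_cases hwv : w = v
    · exact hwv.trans ((eq_iff_eq_of_colourOf_eq hc).mp hwv).symm
    · obtain ⟨⟨s, s'⟩, hp⟩ := nonempty_link_of_dirEdge hd hwv
      have hp' := inl_mem_colourOf.mp (hc ▸ inl_mem_colourOf.mpr hp)
      exact eq_of_mem_link_of_mem_link h (Ne.symm hwv) (link_symm.mp hp) (link_symm.mp hp')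

theorem IsSIso.dirEdge_iff {S₀ S₁ : SiteGraph N S} {φ : Fin S₀.n ≃ Fin S₁.n}
    (hφ : IsSIso S₀ S₁ φ) (v w : Fin S₀.n) : S₁.dirEdge (φ v) (φ w) ↔ S₀.dirEdge v w := by
  simp only [dirEdge, hφ.link_eq, ne_eq, φ.injective.eq_iff]

theorem IsSIso.isIso_rho {S₀ S₁ : SiteGraph N S} {φ : Fin S₀.n ≃ Fin S₁.n}
    (hφ : IsSIso S₀ S₁ φ) : ColGraph.IsIso S₀.rho S₁.rho φ :=
  fun v w => rho_col_eq_iff.mpr ⟨hφ.dirEdge_iff v w, fun _ => hφ.colourOf_eq v w⟩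

theorem link_eq_empty_of_not_dirEdge {S₀ : SiteGraph N S} (h : S₀.edges.Finite)
    {v w : Fin S₀.n} (hvw : ¬S₀.dirEdge v w) (hwv : ¬S₀.dirEdge w v) : S₀.link v w = ∅ := by
  by_contra hne
  exact (dirEdge_or_dirEdge h (fun heq => hvw (Or.inl heq))
    (Set.nonempty_iff_ne_empty.mpr hne)).elim hvw hwv

theorem isSIso_of_isIso_rho {S₀ S₁ : SiteGraph N S} (h₀ : S₀.edges.Finite)
    (h₁ : S₁.edges.Finite) {φ : Fin S₀.n ≃ Fin S₁.n} (hφ : ColGraph.IsIso S₀.rho S₁.rho φ) :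
    IsSIso S₀ S₁ φ := by
  have hcol (v w : Fin S₀.n) : (S₁.dirEdge (φ v) (φ w) ↔ S₀.dirEdge v w) ∧
      (S₀.dirEdge v w → S₁.colourOf (φ v) (φ w) = S₀.colourOf v w) :=
    rho_col_eq_iff.mp (hφ v w)
  have hlink_of_dirEdge (v w) (hd : S₀.dirEdge v w) : S₁.link (φ v) (φ w) = S₀.link v w := by
    ext p
    rw [← inl_mem_colourOf, ← inl_mem_colourOf, (hcol v w).2 hd]
  have hlink (v w) : S₁.link (φ v) (φ w) = S₀.link v w := by
    by_cases hvw : S₀.dirEdge v w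
    · exact hlink_of_dirEdge v w hvw
    by_cases hwv : S₀.dirEdge w v
    · ext ⟨s, s'⟩
      rw [link_symm, hlink_of_dirEdge w v hwv, ← link_symm]
    rw [link_eq_empty_of_not_dirEdge h₀ hvw hwv,
      link_eq_empty_of_not_dirEdge h₁ (mt (hcol v w).1.mp hvw) (mt (hcol w v).1.mp hwv)]
  refine ⟨fun v₁ v₂ s₁ s₂ => (Set.ext_iff.mp (hlink v₁ v₂) (s₁, s₂)).symm, fun v => ?_⟩
  have hname : Sum.inr (S₀.names v) ∈ S₁.colourOf (φ v) (φ v) := by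
    rw [(hcol v v).2 (Or.inl rfl)]
    exact inr_mem_colourOf.mpr ⟨rfl, rfl⟩
  exact (inr_mem_colourOf.mp hname).2

theorem sIso_iff_iso_rho {S₀ S₁ : SiteGraph N S} (h₀ : S₀.edges.Finite)
    (h₁ : S₁.edges.Finite) : SIso S₀ S₁ ↔ ColGraph.Iso S₀.rho S₁.rho :=
  exists_congr fun _ => ⟨IsSIso.isIso_rho, isSIso_of_isIso_rho h₀ h₁⟩

theorem rho_injOn : Set.InjOn (rho (N := N) (S := S)) {T | T.Wf} := by
  rintro ⟨n, E, ν⟩ hT ⟨n', E', ν'⟩ hT' h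
  obtain rfl : n = n' := congrArg ColGraph.n h
  have hcol : (rho ⟨n, E, ν⟩).col = (rho ⟨n, E', ν'⟩).col := eq_of_heq (ColGraph.mk.inj h).2
  exact eq_of_isSIso_refl hT hT'
    (isSIso_of_isIso_rho hT.2.2 hT'.2.2 fun v w => (congrFun (congrFun hcol v) w).symm)

theorem exists_rho_eq_of_iso {S₀ : SiteGraph N S} (h₀ : S₀.Wf)
    {G : ColGraph (Set ((S × S) ⊕ N))} (hG : ColGraph.Iso G S₀.rho) :
    ∃ T : SiteGraph N S, T.Wf ∧ T.rho = G := by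
  obtain ⟨m, colG⟩ := G
  obtain ⟨φ, hφ⟩ := hG
  let ψ : Fin S₀.n ≃ Fin m := φ.symm
  have hcolG (v w : Fin m) : S₀.rho.col (ψ.symm v) (ψ.symm w) = colG v w := hφ v w
  have hT (x y : Fin S₀.n) : (S₀.relabel ψ).rho.col (ψ x) (ψ y) = S₀.rho.col x y :=
    (S₀.isSIso_relabel ψ).isIso_rho x y
  refine ⟨S₀.relabel ψ, h₀.relabel ψ, ?_⟩
  change ColGraph.mk m (S₀.relabel ψ).rho.col = ColGraph.mk m colG
  congr
  refine funext₂ fun (v w : Fin m) => ?_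
  rw [← hcolG, ← hT, ψ.apply_symm_apply, ψ.apply_symm_apply]

end SiteGraph

theorem stmt_15 {N S : Type} [LinearOrder S]
    (L : ColGraph (Set ((S × S) ⊕ N)) → ColGraph (Set ((S × S) ⊕ N)))
    (hL1 : ∀ G, G.Rigid → ColGraph.Iso (L G) G)
    (hL2 : ∀ G G', G.Rigid → G'.Rigid → (L G = L G' ↔ ColGraph.Iso G G')) :
    (∀ S₀ : SiteGraph N S, S₀.Wf →
      ∃! T : SiteGraph N S, T.Wf ∧ SiteGraph.rho T = L (SiteGraph.rho S₀)) ∧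
    (∀ Ls : SiteGraph N S → SiteGraph N S,
      (∀ S₀ : SiteGraph N S, S₀.Wf →
          (Ls S₀).Wf ∧ SiteGraph.rho (Ls S₀) = L (SiteGraph.rho S₀)) →
      (∀ S₀ : SiteGraph N S, S₀.Wf → SiteGraph.SIso (Ls S₀) S₀) ∧
      (∀ S₀ S₁ : SiteGraph N S, S₀.Wf → S₁.Wf →
          (Ls S₀ = Ls S₁ ↔ SiteGraph.SIso S₀ S₁))) := by
  refine ⟨fun S₀ h₀ => ?_, fun Ls hLs => ⟨fun S₀ h₀ => ?_, fun S₀ S₁ h₀ h₁ => ?_⟩⟩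
  · obtain ⟨T, hT, hρ⟩ := SiteGraph.exists_rho_eq_of_iso h₀ (hL1 _ h₀.rho_rigid)
    exact ⟨T, ⟨hT, hρ⟩, fun T' ⟨hT', hρ'⟩ => SiteGraph.rho_injOn hT' hT (hρ'.trans hρ.symm)⟩
  · obtain ⟨hwf, hρ⟩ := hLs S₀ h₀
    exact (SiteGraph.sIso_iff_iso_rho hwf.2.2 h₀.2.2).mpr (hρ ▸ hL1 _ h₀.rho_rigid)
  · obtain ⟨hw₀, hρ₀⟩ := hLs S₀ h₀
    obtain ⟨hw₁, hρ₁⟩ := hLs S₁ h₁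
    rw [SiteGraph.sIso_iff_iso_rho h₀.2.2 h₁.2.2, ← hL2 _ _ h₀.rho_rigid h₁.rho_rigid, ← hρ₀, ← hρ₁]
    exact (SiteGraph.rho_injOn.eq_iff hw₀ hw₁).symm
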